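/- arXiv:2410.05087 — 5 statements merged into one kernel-verified Lean document; each statement's English description precedes it below -/
import Mathlib

section
/- Let (N,v) be a balanced game, let x, y be preimputations, and let S be a nonempty coalition such that y dominates x via S. Then for every balanced collection B' on N \ S with weights λ, one has ∑_{T∈B'} λ_T v(T) ≤ y(N \ S). (That is, the complement coalition receives at y at least the worth of any balanced collection on N \ S.) -/
open Finset

variable {α : Type*} [Fintype α] [DecidableEq α]

/-- Sum of the payments of the players in coalition `S`. -/
def coalSum (x : α → ℝ) (S : Finset α) : ℝ := ∑ i ∈ S, x i

/-- `B` is a balanced collection on `M` with weights `w`. -/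
def IsBalancedOn (M : Finset α) (B : Finset (Finset α)) (w : Finset α → ℝ) : Prop :=
  (∀ S ∈ B, S.Nonempty ∧ S ⊆ M ∧ 0 < w S) ∧
  (∀ i ∈ M, ∑ S ∈ B.filter (fun S => i ∈ S), w S = 1)

/-- The game `v` is balanced. -/
def BalancedGame (v : Finset α → ℝ) : Prop :=
  ∀ B w, IsBalancedOn (univ : Finset α) B w → ∑ S ∈ B, w S * v S ≤ v univ

/-- `x` is a preimputation of the game `v`. -/
def Preimp (v : Finset α → ℝ) (x : α → ℝ) : Prop := coalSum x univ = v univ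

/-- `y` dominates `x` via the coalition `S`. -/
def Dominates (v : Finset α → ℝ) (y x : α → ℝ) (S : Finset α) : Prop :=
  coalSum y S ≤ v S ∧ ∀ i ∈ S, x i < y i

/-- `x` belongs to the core of the game `v`. -/
def InCore (v : Finset α → ℝ) (x : α → ℝ) : Prop :=
  Preimp v x ∧ ∀ S : Finset α, S.Nonempty → v S ≤ coalSum x S

theorem stmt_1 (v : Finset α → ℝ) (hbal : BalancedGame v)
    (x y : α → ℝ) (hx : Preimp v x) (hy : Preimp v y)
    (S : Finset α) (hS : S.Nonempty) (hSproper : S ≠ univ)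
    (hdom : Dominates v y x S)
    (B : Finset (Finset α)) (w : Finset α → ℝ)
    (hB : IsBalancedOn (univ \ S) B w) :
    ∑ T ∈ B, w T * v T ≤ coalSum y (univ \ S) := by
  classical
  obtain ⟨hB1, hB2⟩ := hB
  have hSnotB : S ∉ B := by
    intro h
    obtain ⟨i, hi⟩ := hS
    have h2 := (hB1 S h).2.1 hi
    simp only [Finset.mem_sdiff] at h2
    exact h2.2 hi
  set w' : Finset α → ℝ := fun T => if T = S then 1 else w T with hw'
  have hbal' : IsBalancedOn univ (insert S B) w' := by
    constructor
    · intro T hT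
      by_cases hTS : T = S
      · subst hTS; exact ⟨hS, Finset.subset_univ _, by simp [hw']⟩
      · have hTB : T ∈ B := (Finset.mem_insert.mp hT).resolve_left hTS
        have h := hB1 T hTB
        exact ⟨h.1, Finset.subset_univ _, by simp [hw', hTS, h.2.2]⟩
    · intro i _
      by_cases hiS : i ∈ S
      · rw [Finset.filter_insert, if_pos hiS]
        have hempty : B.filter (fun T => i ∈ T) = ∅ := by
          apply Finset.filter_eq_empty_iff.mpr
          intro T hT hiT
          have h2 := (hB1 T hT).2.1 hiT
          simp only [Finset.mem_sdiff] at h2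
          exact h2.2 hiS
        rw [Finset.sum_insert (by simp [hempty]), hempty]
        simp [hw']
      · rw [Finset.filter_insert, if_neg hiS]
        have heq : ∑ T ∈ B.filter (fun T => i ∈ T), w' T
            = ∑ T ∈ B.filter (fun T => i ∈ T), w T := by
          apply Finset.sum_congr rfl
          intro T hT
          have hTB := (Finset.mem_filter.mp hT).1
          have hTS : T ≠ S := by rintro rfl; exact hSnotB hTB
          simp [hw', hTS]
        rw [heq]
        exact hB2 i (by simp [hiS])
  have key := hbal _ _ hbal'
  rw [Finset.sum_insert hSnotB] at key
  have hwS : w' S = 1 := by simp [hw']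
  have hsum : ∑ T ∈ B, w' T * v T = ∑ T ∈ B, w T * v T := by
    apply Finset.sum_congr rfl
    intro T hT
    have hTS : T ≠ S := by rintro rfl; exact hSnotB hT
    simp [hw', hTS]
  rw [hwS, hsum, one_mul] at key
  have hsplit : coalSum y univ = coalSum y S + coalSum y (univ \ S) := by
    unfold coalSum
    rw [← Finset.sum_sdiff (Finset.subset_univ S)]
    ring
  have hyS := hdom.1
  have hyu : coalSum y univ = v univ := hy
  linarith
end

section
/- Let (N,v) be a balanced game and S a nonempty coalition. If there exists a balanced collection B on N containing S with weights λ satisfying ∑_{T∈B} λ_T v(T) = v(N), then every core element x satisfies x(S) = v(S). -/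
open Finset

variable {α : Type*} [Fintype α] [DecidableEq α]

theorem stmt_3 (v : Finset α → ℝ) (hbal : BalancedGame v)
    (S : Finset α) (hS : S.Nonempty)
    (B : Finset (Finset α)) (w : Finset α → ℝ)
    (hB : IsBalancedOn (univ : Finset α) B w) (hSB : S ∈ B)
    (heq : ∑ T ∈ B, w T * v T = v univ)
    (x : α → ℝ) (hx : InCore v x) :
    coalSum x S = v S := by
  obtain ⟨hmem, hunit⟩ := hB
  obtain ⟨hpre, hcore⟩ := hx
  -- ∑ T ∈ B, w T * coalSum x T = coalSum x univ
  have hswap : ∑ T ∈ B, w T * coalSum x T = coalSum x univ := by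
    have step1 : ∑ T ∈ B, w T * coalSum x T
        = ∑ T ∈ B, ∑ i ∈ (univ : Finset α), (if i ∈ T then w T * x i else 0) := by
      refine Finset.sum_congr rfl fun T _ => ?_
      rw [Finset.sum_ite_mem, Finset.univ_inter, coalSum, Finset.mul_sum]
    have step2 : ∀ i : α, ∑ T ∈ B, (if i ∈ T then w T * x i else 0)
        = (∑ T ∈ B.filter (fun T => i ∈ T), w T) * x i := by
      intro i
      rw [Finset.sum_filter, Finset.sum_mul]
      refine Finset.sum_congr rfl fun T _ => ?_
      by_cases h : i ∈ T <;> simp [h]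
    rw [step1, Finset.sum_comm]
    simp only [step2]
    unfold coalSum
    refine Finset.sum_congr rfl fun i hi => ?_
    rw [hunit i hi, one_mul]
  have hxv : ∑ T ∈ B, w T * coalSum x T = ∑ T ∈ B, w T * v T := by
    rw [hswap, heq]; exact hpre
  have hzero : ∑ T ∈ B, w T * (coalSum x T - v T) = 0 := by
    have : ∑ T ∈ B, w T * (coalSum x T - v T)
        = ∑ T ∈ B, w T * coalSum x T - ∑ T ∈ B, w T * v T := by
      rw [← Finset.sum_sub_distrib]
      exact Finset.sum_congr rfl fun T _ => by ring
    rw [this, hxv, sub_self]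
  have hnonneg : ∀ T ∈ B, 0 ≤ w T * (coalSum x T - v T) := by
    intro T hT
    obtain ⟨hTne, _, hw⟩ := hmem T hT
    exact mul_nonneg hw.le (sub_nonneg.mpr (hcore T hTne))
  have hall := (Finset.sum_eq_zero_iff_of_nonneg hnonneg).mp hzero S hSB
  obtain ⟨_, _, hwS⟩ := hmem S hSB
  have := mul_eq_zero.mp hall
  rcases this with h | h
  · exact absurd h hwS.ne'
  · linarith [sub_eq_zero.mp h]
end

section
/- A collection C of nonempty subsets of N contains a balanced subcollection if and only if there is no side payment σ (σ ∈ ℝ^N with σ(N) = 0) such that σ(S) > 0 for all S ∈ C. Equivalently: C is unbalanced (contains no balanced subcollection) if and only if there exists σ ∈ ℝ^N with ∑_{i∈N} σ_i = 0 and ∑_{i∈S} σ_i > 0 for all S ∈ C. -/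
open Finset

variable {α : Type*} [Fintype α] [DecidableEq α]

/-!
Identify a coalition `S` with its indicator vector `1_S ∈ ℝ^N`. Since every coalition of `C` is
nonempty, `C` contains a balanced subcollection exactly when the convex hull of
`{1_S | S ∈ C}` meets the line `ℝ • 1`: a point `r • 1` of the hull has `r > 0`, and dividing its
convex weights by `r` balances the coalitions of positive weight. If the hull misses the line,
Hahn–Banach separates this compact convex set from the closed line by a functional vanishing on
the line and positive on the hull; its coordinates are the side payment. Conversely, pairing a
side payment `σ` with `∑ λ_S 1_S = 1` gives `∑ λ_S σ(S) = σ(N) = 0`, so not all `σ(S)` are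
positive.
-/

set_option linter.unusedSectionVars false

theorem IsBalancedOn.sum_mul_coalSum {M : Finset α} {B : Finset (Finset α)} {w : Finset α → ℝ}
    (hB : IsBalancedOn M B w) (σ : α → ℝ) :
    ∑ S ∈ B, w S * coalSum σ S = coalSum σ M := by
  calc ∑ S ∈ B, w S * coalSum σ S
      = ∑ S ∈ B, ∑ i ∈ M with i ∈ S, w S * σ i := by
        refine sum_congr rfl fun S hS => ?_
        rw [coalSum, mul_sum, filter_mem_eq_inter, inter_eq_right.2 (hB.1 S hS).2.1]
    _ = ∑ i ∈ M, (∑ S ∈ B with i ∈ S, w S) * σ i := by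
        simp only [sum_filter, sum_mul, ite_mul, zero_mul]
        exact sum_comm
    _ = coalSum σ M := sum_congr rfl fun i hi => by rw [hB.2 i hi, one_mul]

theorem not_isBalancedOn_of_coalSum_pos {M : Finset α} {B : Finset (Finset α)}
    (hB : B.Nonempty) {σ : α → ℝ} (hσM : coalSum σ M = 0) (hσ : ∀ S ∈ B, 0 < coalSum σ S)
    (w : Finset α → ℝ) : ¬ IsBalancedOn M B w := fun hbal =>
  (sum_pos (fun S hS => mul_pos (hbal.1 S hS).2.2 (hσ S hS)) hB).ne'
    (hσM ▸ hbal.sum_mul_coalSum σ)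

noncomputable def coalitionIndicator (S : Finset α) : α → ℝ := Set.indicator (S : Set α) 1

theorem coalitionIndicator_univ : coalitionIndicator (univ : Finset α) = 1 := by
  simp [coalitionIndicator]

theorem sum_smul_coalitionIndicator_apply (C : Finset (Finset α)) (μ : Finset α → ℝ) (i : α) :
    (∑ S ∈ C, μ S • coalitionIndicator S) i = ∑ S ∈ C with i ∈ S, μ S := by
  simp [coalitionIndicator, Set.indicator_apply, sum_filter]

theorem apply_coalitionIndicator {F : Type*} [FunLike F (α → ℝ) ℝ] [LinearMapClass F ℝ (α → ℝ) ℝ]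
    (f : F) (S : Finset α) :
    f (coalitionIndicator S) = coalSum (fun i => f (Pi.single i 1)) S := by
  have := (f : (α → ℝ) →ₗ[ℝ] ℝ).pi_apply_eq_sum_univ (coalitionIndicator S)
  simp only [LinearMap.coe_coe] at this
  rw [this, coalSum]
  simp only [coalitionIndicator, Set.indicator_apply, Finset.mem_coe, Pi.one_apply, ite_smul,
    one_smul, zero_smul, Finset.sum_ite_mem, univ_inter]
  refine sum_congr rfl fun i _ => congrArg f (funext fun j => ?_)
  simp [Pi.single_apply, eq_comm]

theorem isBalancedOn_of_sum_smul_coalitionIndicator_eq {C : Finset (Finset α)}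
    (hC : ∀ S ∈ C, S.Nonempty) {μ : Finset α → ℝ} {r : ℝ} (hr : 0 < r)
    (hμ : ∀ S ∈ C, 0 ≤ μ S) (h : ∑ S ∈ C, μ S • coalitionIndicator S = r • 1) :
    IsBalancedOn univ {S ∈ C | 0 < μ S} (fun S => μ S / r) := by
  refine ⟨fun S hS => ?_, fun i _ => ?_⟩
  · obtain ⟨hSC, hμS⟩ := mem_filter.1 hS
    exact ⟨hC S hSC, subset_univ S, div_pos hμS hr⟩
  · have hi := congrFun h i
    simp only [sum_smul_coalitionIndicator_apply, Pi.smul_apply, Pi.one_apply, smul_eq_mul,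
      mul_one] at hi
    rw [← sum_div, div_eq_one_iff_eq hr.ne', filter_filter, ← hi, sum_filter, sum_filter]
    refine sum_congr rfl fun S hS => ?_
    by_cases hiS : i ∈ S
    · rcases (hμ S hS).lt_or_eq with hpos | hzero
      · simp [hiS, hpos]
      · simp [hiS, ← hzero]
    · simp [hiS]

theorem exists_isBalancedOn_of_smul_one_mem_convexHull {C : Finset (Finset α)}
    (hC : ∀ S ∈ C, S.Nonempty) {r : ℝ}
    (hr : r • (1 : α → ℝ) ∈ convexHull ℝ (coalitionIndicator '' (C : Set (Finset α)))) :
    ∃ B w, B ⊆ C ∧ B.Nonempty ∧ IsBalancedOn univ B w := by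
  rw [← coe_image, mem_convexHull'] at hr
  obtain ⟨ν, hν0, hν1, hνr⟩ := hr
  have hinj : Set.InjOn coalitionIndicator (C : Set (Finset α)) := fun S _ T _ h =>
    Finset.coe_injective (Set.indicator_one_inj ℝ h)
  rw [sum_image hinj] at hν1 hνr
  set μ : Finset α → ℝ := fun S => ν (coalitionIndicator S)
  have hμ : ∀ S ∈ C, 0 ≤ μ S := fun S hS => hν0 _ (mem_image_of_mem _ hS)
  obtain ⟨S₀, hS₀, hμS₀⟩ : ∃ S ∈ C, 0 < μ S := by
    by_contra! hneg
    have := sum_nonpos hneg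
    linarith
  obtain ⟨i, hi⟩ := hC S₀ hS₀
  have hri : r = ∑ S ∈ C with i ∈ S, μ S := by
    simpa using (congrFun hνr i).symm.trans (sum_smul_coalitionIndicator_apply C μ i)
  have hr : 0 < r := hri ▸ hμS₀.trans_le (single_le_sum (fun S hS => hμ S (mem_filter.1 hS).1)
    (mem_filter.2 ⟨hS₀, hi⟩))
  exact ⟨_, _, filter_subset _ _, ⟨S₀, mem_filter.2 ⟨hS₀, hμS₀⟩⟩,
    isBalancedOn_of_sum_smul_coalitionIndicator_eq hC hr hμ hνr⟩

theorem geometric_hahn_banach_compact_submodule {E : Type*} [AddCommGroup E] [Module ℝ E]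
    [TopologicalSpace E] [IsTopologicalAddGroup E] [ContinuousSMul ℝ E] [LocallyConvexSpace ℝ E]
    {s : Set E} {p : Submodule ℝ E} (hconv : Convex ℝ s) (hcomp : IsCompact s)
    (hp : IsClosed (p : Set E)) (disj : Disjoint s p) :
    ∃ f : StrongDual ℝ E, (∀ x ∈ p, f x = 0) ∧ ∀ x ∈ s, 0 < f x := by
  obtain ⟨f, u, v, hfs, huv, hfp⟩ :=
    geometric_hahn_banach_compact_closed hconv hcomp p.convex hp disj
  -- `f` is bounded below on the subspace `p`, hence vanishes on it.
  have hf0 : ∀ x ∈ p, f x = 0 := by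
    intro x hx
    by_contra hne
    have := hfp (((v - 1) / f x) • x) (p.smul_mem _ hx)
    rw [map_smul, smul_eq_mul, div_mul_cancel₀ _ hne] at this
    linarith
  have hv : v < 0 := hf0 0 p.zero_mem ▸ hfp 0 p.zero_mem
  exact ⟨-f, fun x hx => by simp [hf0 x hx], fun x hx => by
    simp only [neg_apply, neg_pos]; linarith [hfs x hx]⟩

theorem stmt_6_general (C : Finset (Finset α)) (hC : ∀ S ∈ C, S.Nonempty) :
    (¬ ∃ (B : Finset (Finset α)) (w : Finset α → ℝ),
        B ⊆ C ∧ B.Nonempty ∧ IsBalancedOn (univ : Finset α) B w) ↔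
    ∃ σ : α → ℝ, coalSum σ univ = 0 ∧ ∀ S ∈ C, 0 < coalSum σ S := by
  refine ⟨fun hunbal => ?_, ?_⟩
  · have disj : Disjoint (convexHull ℝ (coalitionIndicator '' (C : Set (Finset α))))
        (ℝ ∙ (1 : α → ℝ) : Set (α → ℝ)) := by
      refine Set.disjoint_left.2 fun x hx hx1 => hunbal ?_
      obtain ⟨r, rfl⟩ := Submodule.mem_span_singleton.1 hx1
      exact exists_isBalancedOn_of_smul_one_mem_convexHull hC hx
    obtain ⟨f, hf1, hfC⟩ := geometric_hahn_banach_compact_submodule (convex_convexHull ℝ _)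
      ((C.finite_toSet.image _).isCompact_convexHull ℝ)
      (Submodule.closed_of_finiteDimensional _) disj
    refine ⟨fun i => f (Pi.single i 1), ?_, fun S hS => ?_⟩
    · rw [← apply_coalitionIndicator, coalitionIndicator_univ]
      exact hf1 1 (Submodule.mem_span_singleton_self 1)
    · rw [← apply_coalitionIndicator]
      exact hfC _ (subset_convexHull ℝ _ (Set.mem_image_of_mem _ hS))
  · rintro ⟨σ, hσ, hσC⟩ ⟨B, w, hBC, hB, hbal⟩
    exact not_isBalancedOn_of_coalSum_pos hB hσ (fun S hS => hσC S (hBC hS)) w hbal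

theorem stmt_6 [Nonempty α] (C : Finset (Finset α)) (hC : ∀ S ∈ C, S.Nonempty) :
    (¬ ∃ (B : Finset (Finset α)) (w : Finset α → ℝ),
        B ⊆ C ∧ B.Nonempty ∧ IsBalancedOn (univ : Finset α) B w) ↔
    ∃ σ : α → ℝ, coalSum σ univ = 0 ∧ ∀ S ∈ C, 0 < coalSum σ S :=
  stmt_6_general C hC
end

section
/- Let (N,v) be a balanced game and C a collection of nonempty proper coalitions. If the region X_C(v) = { x ∈ ℝ^N : x(N) = v(N), and x(S) < v(S) iff S ∈ C } is nonempty, then C is unbalanced, i.e., C contains no balanced subcollection. -/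
open Finset

variable {α : Type*} [Fintype α] [DecidableEq α]

/-- The region of preimputations whose set of unsatisfied coalitions is exactly `C`. -/
def Region (v : Finset α → ℝ) (C : Finset (Finset α)) : Set (α → ℝ) :=
  {x | Preimp v x ∧ ∀ S : Finset α, S.Nonempty → (coalSum x S < v S ↔ S ∈ C)}

theorem stmt_8 (v : Finset α → ℝ) (hbal : BalancedGame v)
    (C : Finset (Finset α)) (hC : ∀ S ∈ C, S.Nonempty ∧ S ≠ univ)
    (hfeas : (Region v C).Nonempty) :
    ¬ ∃ (B : Finset (Finset α)) (w : Finset α → ℝ),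
      B ⊆ C ∧ B.Nonempty ∧ IsBalancedOn (univ : Finset α) B w := by
  rintro ⟨B, w, hBC, hBne, hIB⟩
  obtain ⟨x, hxpre, hxiff⟩ := hfeas
  obtain ⟨hpos, hw⟩ := hIB
  -- key: ∑ S ∈ B, w S * coalSum x S = coalSum x univ
  have key : ∑ S ∈ B, w S * coalSum x S = coalSum x univ := by
    calc ∑ S ∈ B, w S * coalSum x S
        = ∑ S ∈ B, ∑ i ∈ univ, if i ∈ S then w S * x i else 0 := by
          refine Finset.sum_congr rfl fun S _ => ?_
          rw [coalSum, Finset.mul_sum, ← Finset.sum_filter]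
          congr 1
          ext i
          simp [Finset.mem_filter]
      _ = ∑ i ∈ univ, ∑ S ∈ B, if i ∈ S then w S * x i else 0 := Finset.sum_comm
      _ = ∑ i ∈ univ, x i := by
          refine Finset.sum_congr rfl fun i _ => ?_
          rw [← Finset.sum_filter]
          have : ∑ S ∈ B.filter (fun S => i ∈ S), w S * x i
              = (∑ S ∈ B.filter (fun S => i ∈ S), w S) * x i := by
            rw [Finset.sum_mul]
          rw [this, hw i (mem_univ i), one_mul]
      _ = coalSum x univ := rfl
  have hlt : ∀ S ∈ B, coalSum x S < v S := fun S hS =>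
    (hxiff S (hpos S hS).1).mpr (hBC hS)
  have hsumlt : ∑ S ∈ B, w S * coalSum x S < ∑ S ∈ B, w S * v S := by
    refine Finset.sum_lt_sum_of_nonempty hBne fun S hS => ?_
    exact mul_lt_mul_of_pos_left (hlt S hS) (hpos S hS).2.2
  have := hbal B w ⟨hpos, hw⟩
  rw [key, hxpre] at hsumlt
  linarith
end

section
/- Let C be a feasible collection of a game (N,v) (i.e., X_C(v) ≠ ∅), and suppose there exists y ∈ X_C(v) with ζ(y) ≠ ∅. Then ζ(x) ≠ ∅ for every x ∈ X_C(v). -/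
open Finset

variable {α : Type*} [Fintype α] [DecidableEq α]

/-- The collection of coalitions unsatisfied at `x`. -/
def phi (v : Finset α → ℝ) (x : α → ℝ) : Set (Finset α) :=
  {S | S.Nonempty ∧ coalSum x S < v S}

/-- The domination cone of `x` with respect to `S`. -/
def domCone (v : Finset α → ℝ) (S : Finset α) (x : α → ℝ) : Set (α → ℝ) :=
  {y | Preimp v y ∧ ∀ i ∈ S, x i < y i}

/-- The augmentation cone of `x`. -/
def Aug (v : Finset α → ℝ) (x : α → ℝ) : Set (α → ℝ) :=
  {y | Preimp v y ∧ ∀ S ∈ phi v x, coalSum x S ≤ coalSum y S}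

def zeta (v : Finset α → ℝ) (x : α → ℝ) : Set (α → ℝ) :=
  Aug v x ∩ ⋃ S ∈ phi v x, domCone v S x

theorem stmt_9 (v : Finset α → ℝ) (C : Set (Finset α))
    (y : α → ℝ) (hy : Preimp v y) (hyC : phi v y = C)
    (hzy : (zeta v y).Nonempty)
    (x : α → ℝ) (hx : Preimp v x) (hxC : phi v x = C) :
    (zeta v x).Nonempty := by
  obtain ⟨z, ⟨hzP, hzA⟩, hzD⟩ := hzy
  rw [Set.mem_iUnion₂] at hzD
  obtain ⟨S, hS, hzPre, hzdom⟩ := hzD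
  have hsum : ∀ T : Finset α, coalSum (fun i => x i + (z i - y i)) T
      = coalSum x T + (coalSum z T - coalSum y T) := by
    intro T
    simp [coalSum, Finset.sum_add_distrib, Finset.sum_sub_distrib]
  have hP : Preimp v (fun i => x i + (z i - y i)) := by
    unfold Preimp at *
    rw [hsum, hx, hy, hzP]; ring
  refine ⟨fun i => x i + (z i - y i), ⟨hP, ?_⟩, ?_⟩
  · intro T hT
    rw [hsum]
    have := hzA T (by rw [hyC, ← hxC] at *; exact hT)
    linarith
  · rw [Set.mem_iUnion₂]
    refine ⟨S, by rw [hxC, ← hyC]; exact hS, hP, ?_⟩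
    intro i hi
    have := hzdom i hi
    dsimp only
    linarith
end
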